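/- arXiv:1605.09220 — 6 statements merged into one kernel-verified Lean document; each statement's English description precedes it below -/
import Mathlib

section
/- For every γ ∈ (-1, 0) and all positive reals x, y, one has x·y·(x^γ - y^γ)²/(x^γ + y^γ) ≤ (x - y)² · min(x^γ, y^γ). -/
open Real Set

theorem stmt2 (γ : ℝ) (hγ : γ ∈ Set.Ioo (-1 : ℝ) 0) (x y : ℝ) (hx : 0 < x) (hy : 0 < y) :
    x * y * (x ^ γ - y ^ γ) ^ 2 / (x ^ γ + y ^ γ) ≤ (x - y) ^ 2 * min (x ^ γ) (y ^ γ) := by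
  obtain ⟨hγ1, hγ2⟩ := hγ
  wlog hxy : x ≤ y generalizing x y
  · have h := this y x hy hx (le_of_not_ge hxy)
    calc x * y * (x ^ γ - y ^ γ) ^ 2 / (x ^ γ + y ^ γ)
        = y * x * (y ^ γ - x ^ γ) ^ 2 / (y ^ γ + x ^ γ) := by ring_nf
      _ ≤ (y - x) ^ 2 * min (y ^ γ) (x ^ γ) := h
      _ = (x - y) ^ 2 * min (x ^ γ) (y ^ γ) := by rw [min_comm]; ring_nf
  have ha : 0 < x ^ γ := rpow_pos_of_pos hx γ
  have hb : 0 < y ^ γ := rpow_pos_of_pos hy γ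
  have hba : y ^ γ ≤ x ^ γ := rpow_le_rpow_of_nonpos hx hxy hγ2.le
  have h2 : x * x ^ γ ≤ y * y ^ γ := by
    have := Real.rpow_le_rpow hx.le hxy (by linarith : (0:ℝ) ≤ 1 + γ)
    rwa [Real.rpow_add hx 1 γ, Real.rpow_add hy 1 γ, Real.rpow_one, Real.rpow_one] at this
  rw [min_eq_right hba, div_le_iff₀ (by positivity)]
  have hy2 : x ≤ y := hxy
  have h3 : y * (x ^ γ - y ^ γ) ≤ (y - x) * x ^ γ := by nlinarith
  have h4 : (y * (x ^ γ - y ^ γ)) ^ 2 ≤ ((y - x) * x ^ γ) ^ 2 := by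
    have hnn : 0 ≤ y * (x ^ γ - y ^ γ) := by nlinarith
    nlinarith
  have h5 : x * (x ^ γ) ^ 2 ≤ y * y ^ γ * (x ^ γ + y ^ γ) := by
    nlinarith [mul_le_mul_of_nonneg_right h2 ha.le, mul_pos hy (mul_pos hb hb)]
  have key : x * y * (x ^ γ - y ^ γ) ^ 2 * y ^ 2 ≤ (x - y) ^ 2 * y ^ γ * (x ^ γ + y ^ γ) * y ^ 2 := by
    nlinarith [mul_le_mul_of_nonneg_left h4 (mul_pos hx hy).le,
      mul_le_mul_of_nonneg_left h5 (mul_nonneg (sq_nonneg (y - x)) hy.le)]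
  exact le_of_mul_le_mul_right key (pow_pos hy 2)
end

section
/- Let β: (0, π/2) → (0, ∞) be measurable with c₀ θ^{-1-ν} ≤ β(θ) ≤ c₁ θ^{-1-ν} for all θ ∈ (0, π/2), where 0 < c₀ < c₁ and ν ∈ (0,1). Define H(θ) = ∫_θ^{π/2} β(x) dx for θ ∈ (0, π/2). Then H is a continuous strictly decreasing bijection from (0, π/2) onto (0, ∞), and its inverse G: (0, ∞) → (0, π/2) satisfies c₂(1+z)^{-1/ν} ≤ G(z) ≤ c₃(1+z)^{-1/ν} for all z > 0, for some constants 0 < c₂ < c₃ depending only on c₀, c₁, ν. -/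
set_option maxHeartbeats 1000000


open Real Set intervalIntegral

/-- If `c₀ θ^{-1-ν} ≤ β(θ) ≤ c₁ θ^{-1-ν}` on `(0, π/2)` with `ν ∈ (0,1)`, then
`H(θ) = ∫_θ^{π/2} β` is a continuous strictly decreasing bijection from `(0, π/2)`
onto `(0, ∞)`, whose inverse `G` satisfies
`c₂ (1+z)^{-1/ν} ≤ G z ≤ c₃ (1+z)^{-1/ν}` for all `z > 0`. -/
theorem stmt4 (ν c₀ c₁ : ℝ) (hν : ν ∈ Set.Ioo (0 : ℝ) 1) (hc : 0 < c₀) (hcc : c₀ < c₁)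
    (β : ℝ → ℝ) (hβm : Measurable β)
    (hβ : ∀ θ ∈ Set.Ioo 0 (π / 2), c₀ * θ ^ (-1 - ν) ≤ β θ ∧ β θ ≤ c₁ * θ ^ (-1 - ν)) :
    ContinuousOn (fun θ => ∫ x in θ..(π / 2), β x) (Set.Ioo 0 (π / 2)) ∧
    StrictAntiOn (fun θ => ∫ x in θ..(π / 2), β x) (Set.Ioo 0 (π / 2)) ∧
    Set.BijOn (fun θ => ∫ x in θ..(π / 2), β x) (Set.Ioo 0 (π / 2)) (Set.Ioi 0) ∧
    ∃ G : ℝ → ℝ, (∀ θ ∈ Set.Ioo 0 (π / 2), G (∫ x in θ..(π / 2), β x) = θ) ∧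
      (∀ z > 0, ∫ x in (G z)..(π / 2), β x = z) ∧
      ∃ c₂ c₃ : ℝ, 0 < c₂ ∧ c₂ < c₃ ∧
        ∀ z > 0, c₂ * (1 + z) ^ (-1 / ν) ≤ G z ∧ G z ≤ c₃ * (1 + z) ^ (-1 / ν) := by
  obtain ⟨hν0, hν1⟩ := hν
  have hπ : (0:ℝ) < π / 2 := by positivity
  have hc₁ : 0 < c₁ := hc.trans hcc
  set H : ℝ → ℝ := fun θ => ∫ x in θ..(π / 2), β x with hHdef
  -- a.e. bound machinery
  have hne : ∀ᵐ x ∂(MeasureTheory.volume : MeasureTheory.Measure ℝ), x ≠ π / 2 := by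
    refine MeasureTheory.ae_iff.2 ?_
    have : {x : ℝ | ¬ x ≠ π / 2} = {π / 2} := by ext x; simp
    rw [this]
    exact MeasureTheory.measure_singleton _
  -- integrability of β on subintervals
  have hIntOn : ∀ a b : ℝ, 0 < a → b ≤ π / 2 →
      MeasureTheory.IntegrableOn β (Icc a b) := by
    intro a b ha hb
    refine MeasureTheory.Integrable.mono'
      (MeasureTheory.integrable_const (c₁ * a ^ (-1 - ν)))
      hβm.aestronglyMeasurable ?_
    have h1 : ∀ᵐ x ∂(MeasureTheory.volume.restrict (Icc a b)), x ∈ Icc a b :=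
      MeasureTheory.ae_restrict_mem measurableSet_Icc
    have h2 := MeasureTheory.ae_restrict_of_ae (s := Icc a b) hne
    filter_upwards [h1, h2] with x hx hxne
    have hx0 : x ∈ Ioo 0 (π / 2) :=
      ⟨ha.trans_le hx.1, lt_of_le_of_ne (hx.2.trans hb) hxne⟩
    obtain ⟨hl, hu⟩ := hβ x hx0
    have hxp : (0:ℝ) < x := hx0.1
    have hbpos : 0 < β x := lt_of_lt_of_le (by positivity) hl
    rw [Real.norm_eq_abs, abs_of_pos hbpos]
    refine hu.trans ?_
    have h3 : x ^ (-1 - ν) ≤ a ^ (-1 - ν) :=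
      Real.rpow_le_rpow_of_nonpos ha hx.1 (by linarith)
    exact mul_le_mul_of_nonneg_left h3 hc₁.le
  have hInt : ∀ a b : ℝ, 0 < a → a ≤ b → b ≤ π / 2 →
      IntervalIntegrable β MeasureTheory.volume a b := by
    intro a b ha hab hb
    apply MeasureTheory.IntegrableOn.intervalIntegrable
    rw [uIcc_of_le hab]
    exact hIntOn a b ha hb
  -- integrability and value of the power integral
  have hrc : ∀ a b : ℝ, 0 < a → a ≤ b → ∀ c : ℝ,
      IntervalIntegrable (fun x => c * x ^ (-1 - ν)) MeasureTheory.volume a b := by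
    intro a b ha hab c
    apply ContinuousOn.intervalIntegrable
    apply ContinuousOn.mul continuousOn_const
    apply ContinuousOn.rpow_const continuousOn_id
    intro x hx
    rw [uIcc_of_le hab] at hx
    exact Or.inl (ne_of_gt (ha.trans_le hx.1))
  have hrint : ∀ a b : ℝ, 0 < a → a ≤ b →
      ∫ x in a..b, x ^ (-1 - ν) = (a ^ (-ν) - b ^ (-ν)) / ν := by
    intro a b ha hab
    rw [integral_rpow (Or.inr ⟨by intro h; linarith, by
      rw [uIcc_of_le hab]; rintro ⟨h1, h2⟩; linarith⟩)]
    have e : (-1 - ν) + 1 = -ν := by ring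
    rw [e, div_neg, ← neg_div, neg_sub]
  -- comparison of integrals of β on subintervals
  have hcomp : ∀ a b : ℝ, 0 < a → a ≤ b → b ≤ π / 2 →
      c₀ * ((a ^ (-ν) - b ^ (-ν)) / ν) ≤ (∫ x in a..b, β x) ∧
      (∫ x in a..b, β x) ≤ c₁ * ((a ^ (-ν) - b ^ (-ν)) / ν) := by
    intro a b ha hab hb
    have h1 : ∀ᵐ x ∂(MeasureTheory.volume.restrict (Icc a b)), x ∈ Icc a b :=
      MeasureTheory.ae_restrict_mem measurableSet_Icc
    have h2 := MeasureTheory.ae_restrict_of_ae (s := Icc a b) hne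
    have hmem : ∀ᵐ x ∂(MeasureTheory.volume.restrict (Icc a b)), x ∈ Ioo 0 (π/2) := by
      filter_upwards [h1, h2] with x hx hxne
      exact ⟨ha.trans_le hx.1, lt_of_le_of_ne (hx.2.trans hb) hxne⟩
    constructor
    · have := integral_mono_ae_restrict hab (hrc a b ha hab c₀)
        (hInt a b ha hab hb) (by filter_upwards [hmem] with x hx; exact (hβ x hx).1)
      calc c₀ * ((a ^ (-ν) - b ^ (-ν)) / ν) = ∫ x in a..b, c₀ * x ^ (-1 - ν) := by
            rw [integral_const_mul, hrint a b ha hab]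
        _ ≤ _ := this
    · have := integral_mono_ae_restrict hab (hInt a b ha hab hb)
        (hrc a b ha hab c₁) (by filter_upwards [hmem] with x hx; exact (hβ x hx).2)
      calc (∫ x in a..b, β x) ≤ ∫ x in a..b, c₁ * x ^ (-1 - ν) := this
        _ = c₁ * ((a ^ (-ν) - b ^ (-ν)) / ν) := by
            rw [integral_const_mul, hrint a b ha hab]
  -- bounds on H
  have hHb : ∀ θ ∈ Ioo 0 (π / 2),
      c₀ * ((θ ^ (-ν) - (π/2) ^ (-ν)) / ν) ≤ H θ ∧
      H θ ≤ c₁ * ((θ ^ (-ν) - (π/2) ^ (-ν)) / ν) :=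
    fun θ hθ => hcomp θ (π/2) hθ.1 hθ.2.le le_rfl
  -- positivity of the lower bound
  have hlb : ∀ a b : ℝ, 0 < a → a < b → b ≤ π / 2 →
      0 < c₀ * ((a ^ (-ν) - b ^ (-ν)) / ν) := by
    intro a b ha hab hb
    have : b ^ (-ν) < a ^ (-ν) :=
      Real.rpow_lt_rpow_of_neg ha hab (by linarith)
    have h3 : 0 < (a ^ (-ν) - b ^ (-ν)) / ν := div_pos (by linarith) hν0
    exact mul_pos hc h3
  -- strict antitonicity
  have hSA : StrictAntiOn H (Ioo 0 (π / 2)) := by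
    intro x hx y hy hxy
    have hsplit : (∫ t in x..y, β t) + H y = H x :=
      integral_add_adjacent_intervals (hInt x y hx.1 hxy.le hy.2.le)
        (hInt y (π/2) hy.1 hy.2.le le_rfl)
    have h1 := (hcomp x y hx.1 hxy.le hy.2.le).1
    have h2 := hlb x y hx.1 hxy hy.2.le
    linarith
  -- continuity
  have hCont : ContinuousOn H (Ioo 0 (π / 2)) := by
    intro θ₀ hθ₀
    apply ContinuousAt.continuousWithinAt
    have ha : (0:ℝ) < θ₀ / 2 := by linarith [hθ₀.1]
    have ha2 : θ₀ / 2 < θ₀ := by linarith [hθ₀.1]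
    have hIcc : Icc (θ₀/2) (π/2) ∈ nhds θ₀ := Icc_mem_nhds ha2 hθ₀.2
    have hIntu : MeasureTheory.IntegrableOn β (uIcc (θ₀/2) (π/2)) := by
      rw [uIcc_of_le (by linarith [hθ₀.2])]
      exact hIntOn _ _ ha le_rfl
    have hco := continuousOn_primitive_interval_left hIntu
    rw [uIcc_of_le (by linarith [hθ₀.2])] at hco
    exact ContinuousWithinAt.continuousAt (hco θ₀ ⟨ha2.le, hθ₀.2.le⟩) hIcc
  -- the two comparison points θ₁ z ≤ θ₂ z
  have hν' : ν ≠ 0 := ne_of_gt hν0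
  set p : ℝ := (π/2) ^ (-ν) with hp
  have hppos : 0 < p := Real.rpow_pos_of_pos hπ _
  set t₁ : ℝ → ℝ := fun z => (ν * z / c₀ + p) ^ (-1/ν) with ht₁
  set t₂ : ℝ → ℝ := fun z => (ν * z / c₁ + p) ^ (-1/ν) with ht₂
  have hu₀ : ∀ z, 0 < z → 0 < ν * z / c₀ + p := by intro z hz; positivity
  have hu₁ : ∀ z, 0 < z → 0 < ν * z / c₁ + p := by intro z hz; positivity
  have hinv : ∀ u : ℝ, 0 < u → (u ^ (-1/ν)) ^ (-ν) = u := by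
    intro u hu
    rw [← Real.rpow_mul hu.le]
    have h1 : (-1/ν) * (-ν) = 1 := by field_simp
    rw [h1, Real.rpow_one]
  have hexp : -1/ν < 0 := div_neg_of_neg_of_pos (by norm_num) hν0
  have ht₁pos : ∀ z, 0 < z → 0 < t₁ z := fun z hz => Real.rpow_pos_of_pos (hu₀ z hz) _
  have ht₂lt : ∀ z, 0 < z → t₂ z < π/2 := by
    intro z hz
    have h1 : p < ν * z / c₁ + p := by
      have h2 : 0 < ν * z / c₁ := by positivity
      linarith
    have h3 := Real.rpow_lt_rpow_of_neg hppos h1 hexp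
    have hpp : p ^ (-1/ν) = π/2 := by
      rw [hp, ← Real.rpow_mul hπ.le]
      have h4 : (-ν) * (-1/ν) = 1 := by field_simp
      rw [h4, Real.rpow_one]
    rw [hpp] at h3
    exact h3
  have ht₁₂ : ∀ z, 0 < z → t₁ z ≤ t₂ z := by
    intro z hz
    apply Real.rpow_le_rpow_of_nonpos (hu₁ z hz) _ hexp.le
    have h1 : ν * z / c₁ ≤ ν * z / c₀ := by
      gcongr
    linarith
  have hmem₁ : ∀ z, 0 < z → t₁ z ∈ Ioo 0 (π/2) := fun z hz =>
    ⟨ht₁pos z hz, lt_of_le_of_lt (ht₁₂ z hz) (ht₂lt z hz)⟩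
  have hmem₂ : ∀ z, 0 < z → t₂ z ∈ Ioo 0 (π/2) := fun z hz =>
    ⟨Real.rpow_pos_of_pos (hu₁ z hz) _, ht₂lt z hz⟩
  have hHt₁ : ∀ z, 0 < z → z ≤ H (t₁ z) := by
    intro z hz
    have h := (hHb _ (hmem₁ z hz)).1
    have hval : (t₁ z) ^ (-ν) = ν * z / c₀ + p := hinv _ (hu₀ z hz)
    rw [hval] at h
    have he : c₀ * ((ν * z / c₀ + p - p) / ν) = z := by field_simp; ring
    linarith
  have hHt₂ : ∀ z, 0 < z → H (t₂ z) ≤ z := by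
    intro z hz
    have h := (hHb _ (hmem₂ z hz)).2
    have hval : (t₂ z) ^ (-ν) = ν * z / c₁ + p := hinv _ (hu₁ z hz)
    rw [hval] at h
    have he : c₁ * ((ν * z / c₁ + p - p) / ν) = z := by field_simp; ring
    linarith
  have hexists : ∀ z, 0 < z → ∃ θ, θ ∈ Ioo 0 (π/2) ∧ H θ = z := by
    intro z hz
    have hsub : Icc (t₁ z) (t₂ z) ⊆ Ioo 0 (π/2) := fun x hx =>
      ⟨lt_of_lt_of_le (ht₁pos z hz) hx.1, lt_of_le_of_lt hx.2 (ht₂lt z hz)⟩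
    have hC : ContinuousOn H (Icc (t₁ z) (t₂ z)) := hCont.mono hsub
    have hIVT := intermediate_value_Icc' (ht₁₂ z hz) hC
    obtain ⟨θ, hθ, hθz⟩ := hIVT ⟨hHt₂ z hz, hHt₁ z hz⟩
    exact ⟨θ, hsub hθ, hθz⟩
  have hloc : ∀ z, 0 < z → ∀ θ ∈ Ioo 0 (π/2), H θ = z → t₁ z ≤ θ ∧ θ ≤ t₂ z := by
    intro z hz θ hθ hθz
    constructor
    · by_contra h
      push_neg at h
      have h1 := hSA hθ (hmem₁ z hz) h
      have h2 := hHt₁ z hz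
      linarith
    · by_contra h
      push_neg at h
      have h1 := hSA (hmem₂ z hz) hθ h
      have h2 := hHt₂ z hz
      linarith
  have hmaps : MapsTo H (Ioo 0 (π/2)) (Ioi 0) := by
    intro θ hθ
    have h1 := (hHb θ hθ).1
    have h2 := hlb θ (π/2) hθ.1 hθ.2 le_rfl
    exact lt_of_lt_of_le h2 h1
  have hBij : BijOn H (Ioo 0 (π/2)) (Ioi 0) :=
    ⟨hmaps, hSA.injOn, fun z hz => hexists z hz⟩
  refine ⟨hCont, hSA, hBij, ?_⟩
  choose! g hgmem hgval using hexists
  refine ⟨g, ?_, ?_, ?_⟩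
  · intro θ hθ
    have hpos : 0 < H θ := hmaps hθ
    exact hSA.injOn (hgmem _ hpos) hθ (hgval _ hpos)
  · intro z hz
    exact hgval z hz
  · set A : ℝ := max (ν / c₀) p with hA
    set B : ℝ := min (ν / c₁) p with hB
    have hApos : 0 < A := lt_of_lt_of_le hppos (le_max_right _ _)
    have hBpos : 0 < B := lt_min (by positivity) hppos
    have hBA : B < A := by
      have h1 : B ≤ ν / c₁ := min_le_left _ _
      have h2 : ν / c₀ ≤ A := le_max_left _ _
      have h3 : ν / c₁ < ν / c₀ := by gcongr
      linarith
    refine ⟨A ^ (-1/ν), B ^ (-1/ν), Real.rpow_pos_of_pos hApos _,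
      Real.rpow_lt_rpow_of_neg hBpos hBA hexp, ?_⟩
    intro z hz
    have h1z : (0:ℝ) < 1 + z := by linarith
    obtain ⟨hl, hr⟩ := hloc z hz (g z) (hgmem z hz) (hgval z hz)
    constructor
    · have hcle : ν * z / c₀ + p ≤ A * (1 + z) := by
        have e1 : ν * z / c₀ ≤ A * z := by
          have h4 : ν / c₀ ≤ A := le_max_left _ _
          calc ν * z / c₀ = (ν / c₀) * z := by ring
            _ ≤ A * z := by gcongr
        have e2 : p ≤ A := le_max_right _ _
        nlinarith
      have h2 : (A * (1 + z)) ^ (-1/ν) ≤ t₁ z :=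
        Real.rpow_le_rpow_of_nonpos (hu₀ z hz) hcle hexp.le
      rw [Real.mul_rpow hApos.le h1z.le] at h2
      linarith
    · have hcle : B * (1 + z) ≤ ν * z / c₁ + p := by
        have e1 : B * z ≤ ν * z / c₁ := by
          have : B ≤ ν / c₁ := min_le_left _ _
          calc B * z ≤ (ν / c₁) * z := by gcongr
            _ = ν * z / c₁ := by ring
        have e2 : B ≤ p := min_le_right _ _
        nlinarith
      have h2 : t₂ z ≤ (B * (1 + z)) ^ (-1/ν) :=
        Real.rpow_le_rpow_of_nonpos (by positivity) hcle hexp.le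
      rw [Real.mul_rpow hBpos.le h1z.le] at h2
      linarith
end

section
/- Assume c₂(1+z)^{-1/ν} ≤ G(z) ≤ c₃(1+z)^{-1/ν} for all z > 0, with ν ∈ (0,1) and γ ∈ (-1, 0) such that γ + ν > 0. For K ≥ 1 and x > 0 define Ψ_K(x) = π ∫_K^∞ (1 - cos G(z/x^γ)) dz. Then there is a constant C (depending only on c₃, ν, γ) such that Ψ_K(x) ≤ C min(x^γ, x^{2γ/ν} K^{1-2/ν}) for all x > 0, K ≥ 1. -/
/-!
The substitution `z = x^γ w` turns the integral into `x^γ ∫_{K/x^γ}^∞ (1 - cos G(w)) dw`, and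
`1 - cos θ ≤ θ²/2 ≤ (c₃²/2)(1 + w)^{-2/ν}` bounds it by a multiple of `x^γ (1 + K/x^γ)^{1-2/ν}`.
As `1 - 2/ν < 0`, dropping either summand of `1 + K/x^γ` gives one of the two terms of the minimum.
-/

open Real Set MeasureTheory

section ShiftIoi
variable {E : Type*} [NormedAddCommGroup E]

theorem integral_Ioi_comp_add_left [NormedSpace ℝ E] (g : ℝ → E) (a c : ℝ) :
    ∫ x in Ioi a, g (c + x) = ∫ x in Ioi (c + a), g x := by
  have := (measurePreserving_add_left volume c).setIntegral_preimage_emb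
    (measurableEmbedding_addLeft c) g (Ioi (c + a))
  rwa [preimage_const_add_Ioi, add_sub_cancel_left] at this

theorem integrableOn_Ioi_comp_add_left_iff (g : ℝ → E) (a c : ℝ) :
    IntegrableOn (fun x => g (c + x)) (Ioi a) ↔ IntegrableOn g (Ioi (c + a)) := by
  have := (measurePreserving_add_left volume c).integrableOn_comp_preimage
    (measurableEmbedding_addLeft c) (f := g) (s := Ioi (c + a))
  rwa [preimage_const_add_Ioi, add_sub_cancel_left] at this

end ShiftIoi

lemma integrableOn_Ioi_one_add_rpow {a p : ℝ} (ha : -1 < a) (hp : p < -1) :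
    IntegrableOn (fun w : ℝ => (1 + w) ^ p) (Ioi a) :=
  (integrableOn_Ioi_comp_add_left_iff (· ^ p) a 1).2
    (integrableOn_Ioi_rpow_of_lt hp (by linarith))

lemma integral_Ioi_one_add_rpow {a p : ℝ} (ha : -1 < a) (hp : p < -1) :
    ∫ w in Ioi a, (1 + w) ^ p = (1 + a) ^ (p + 1) / -(p + 1) := by
  rw [integral_Ioi_comp_add_left (· ^ p) a 1, integral_Ioi_rpow_of_lt hp (by linarith),
    neg_div, div_neg]

lemma integral_Ioi_one_sub_cos_le {G : ℝ → ℝ} {a p c : ℝ} (ha : 0 ≤ a) (hp : p < -1)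
    (hG : ∀ w > 0, G w ^ 2 ≤ c * (1 + w) ^ p) :
    ∫ w in Ioi a, (1 - cos (G w)) ≤ c / 2 * ((1 + a) ^ (p + 1) / -(p + 1)) := by
  have ha' : -1 < a := by linarith
  rw [← integral_Ioi_one_add_rpow ha' hp, ← integral_const_mul]
  refine integral_mono_of_nonneg (ae_of_all _ fun w => sub_nonneg.2 (cos_le_one _))
    ((integrableOn_Ioi_one_add_rpow ha' hp).const_mul _) ?_
  filter_upwards [ae_restrict_mem measurableSet_Ioi] with w hw
  calc 1 - cos (G w) ≤ G w ^ 2 / 2 := by linarith [one_sub_sq_div_two_le_cos (x := G w)]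
    _ ≤ c / 2 * (1 + w) ^ p := by linarith [hG w (ha.trans_lt hw)]

lemma mul_one_add_div_rpow_le_min {s K q : ℝ} (hs : 0 < s) (hK : 0 < K) (hq : q ≤ 0) :
    s * (1 + K / s) ^ q ≤ min s (s ^ (1 - q) * K ^ q) := by
  have hKs : 0 < K / s := div_pos hK hs
  refine le_min ?_ ?_
  · exact mul_le_of_le_one_right hs.le (rpow_le_one_of_one_le_of_nonpos (by linarith) hq)
  · calc s * (1 + K / s) ^ q ≤ s * (K / s) ^ q := by
          gcongr ?_ * ?_
          exact rpow_le_rpow_of_nonpos hKs (by linarith) hq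
      _ = s ^ (1 - q) * K ^ q := by
          rw [div_rpow hK.le hs.le, rpow_sub hs, rpow_one]; ring

theorem stmt7_general (ν γ c₂ c₃ : ℝ) (hν : ν ∈ Set.Ioo (0 : ℝ) 1)
    (hc₂ : 0 < c₂) (hc : c₂ < c₃) (G : ℝ → ℝ)
    (hG : ∀ z > 0, c₂ * (1 + z) ^ (-1 / ν) ≤ G z ∧ G z ≤ c₃ * (1 + z) ^ (-1 / ν)) :
    ∃ C > 0, ∀ x > 0, ∀ K ≥ (1 : ℝ),
      π * ∫ z in Set.Ioi K, (1 - Real.cos (G (z / x ^ γ)))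
        ≤ C * min (x ^ γ) (x ^ (2 * γ / ν) * K ^ (1 - 2 / ν)) := by
  obtain ⟨hν0, hν1⟩ := hν
  have h2ν : 1 < 2 / ν := by rw [one_lt_div hν0]; linarith
  have hG_sq : ∀ w > 0, G w ^ 2 ≤ c₃ ^ 2 * (1 + w) ^ (-2 / ν) := fun w hw => by
    have hGw := hG w hw
    have hG0 : 0 ≤ G w := le_trans (by positivity) hGw.1
    calc G w ^ 2 ≤ (c₃ * (1 + w) ^ (-1 / ν)) ^ 2 := pow_le_pow_left₀ hG0 hGw.2 2
      _ = c₃ ^ 2 * (1 + w) ^ (-2 / ν) := by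
        rw [mul_pow, ← rpow_mul_natCast (by linarith)]; ring_nf
  refine ⟨π * c₃ ^ 2 / 2 / (2 / ν - 1), ?_, fun x hx K hK => ?_⟩
  · have := hc₂.trans hc
    have := sub_pos.2 h2ν
    positivity
  have hs : 0 < x ^ γ := rpow_pos_of_pos hx γ
  have hsubst : ∫ z in Ioi K, (1 - cos (G (z / x ^ γ)))
      = x ^ γ * ∫ w in Ioi (K / x ^ γ), (1 - cos (G w)) := by
    simpa only [inv_inv, smul_eq_mul, ← div_eq_inv_mul] using
      integral_comp_mul_left_Ioi (fun w => 1 - cos (G w)) K (inv_pos.2 hs)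
  have hbound := integral_Ioi_one_sub_cos_le (a := K / x ^ γ) (by positivity)
    (by rw [neg_div]; linarith) hG_sq
  have hmin := mul_one_add_div_rpow_le_min (K := K) (q := 1 - 2 / ν) hs (by linarith) (by linarith)
  rw [sub_sub_cancel, ← rpow_mul hx.le, show γ * (2 / ν) = 2 * γ / ν by ring] at hmin
  calc π * ∫ z in Ioi K, (1 - cos (G (z / x ^ γ)))
      ≤ π * (x ^ γ * (c₃ ^ 2 / 2 * ((1 + K / x ^ γ) ^ (-2 / ν + 1) / -(-2 / ν + 1)))) := by
        rw [hsubst]; gcongr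
    _ = π * c₃ ^ 2 / 2 / (2 / ν - 1) * (x ^ γ * (1 + K / x ^ γ) ^ (1 - 2 / ν)) := by
        rw [show -2 / ν + 1 = 1 - 2 / ν by ring, show -(1 - 2 / ν) = 2 / ν - 1 by ring]; ring
    _ ≤ _ := by gcongr

/-- If `c₂(1+z)^{-1/ν} ≤ G z ≤ c₃(1+z)^{-1/ν}`, `ν ∈ (0,1)`, `γ ∈ (-1,0)`, `γ+ν>0`,
then `Ψ_K(x) = π ∫_K^∞ (1 - cos G(z/x^γ)) dz ≤ C min(x^γ, x^{2γ/ν} K^{1-2/ν})`. -/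
theorem stmt7 (ν γ c₂ c₃ : ℝ) (hν : ν ∈ Set.Ioo (0 : ℝ) 1) (hγ : γ ∈ Set.Ioo (-1 : ℝ) 0)
    (hγν : 0 < γ + ν) (hc₂ : 0 < c₂) (hc : c₂ < c₃) (G : ℝ → ℝ)
    (hG : ∀ z > 0, c₂ * (1 + z) ^ (-1 / ν) ≤ G z ∧ G z ≤ c₃ * (1 + z) ^ (-1 / ν)) :
    ∃ C > 0, ∀ x > 0, ∀ K ≥ (1 : ℝ),
      π * ∫ z in Set.Ioi K, (1 - Real.cos (G (z / x ^ γ)))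
        ≤ C * min (x ^ γ) (x ^ (2 * γ / ν) * K ^ (1 - 2 / ν)) :=
  stmt7_general ν γ c₂ c₃ hν hc₂ hc G hG
end

section
/- Assume G satisfies G(z) ≤ c₃(1+z)^{-1/ν} for z > 0, with ν ∈ (0,1), and let γ ∈ (-1,0). Define Φ_K(x) = π ∫_0^K (1 - cos G(z/x^γ)) dz for x > 0, K ≥ 1. Then: (i) Φ_K(x) ≤ C x^γ for all x > 0; (ii) the function F_K(x) = ∫_0^K (1 - cos G(z/x)) dz satisfies |F_K'(x)| ≤ C uniformly in K ≥ 1 and x > 0; consequently |Φ_K(x) - Φ_K(y)| ≤ C |x^γ - y^γ| for all x, y > 0. -/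
open Real Set intervalIntegral
open MeasureTheory Filter Topology

/-- For `G z ≤ c₃(1+z)^{-1/ν}`, `ν ∈ (0,1)`, `γ ∈ (-1,0)`:
(i) `Φ_K(x) = π∫_0^K (1-cos G(z/x^γ))dz ≤ C x^γ`;
(ii) `F_K(x) = ∫_0^K (1-cos G(z/x))dz` has derivative bounded by `C` uniformly in
`K ≥ 1`, `x > 0`; consequently `|Φ_K(x) - Φ_K(y)| ≤ C|x^γ - y^γ|`. -/
theorem stmt8 (ν γ c₃ : ℝ) (hν : ν ∈ Set.Ioo (0 : ℝ) 1) (hγ : γ ∈ Set.Ioo (-1 : ℝ) 0)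
    (hc₃ : 0 < c₃) (G : ℝ → ℝ) (hGc : ContinuousOn G (Set.Ici 0))
    (hGnn : ∀ z ≥ 0, 0 ≤ G z) (hG : ∀ z > 0, G z ≤ c₃ * (1 + z) ^ (-1 / ν)) :
    ∃ C > 0,
      (∀ K ≥ (1 : ℝ), ∀ x > 0,
          π * ∫ z in (0 : ℝ)..K, (1 - Real.cos (G (z / x ^ γ))) ≤ C * x ^ γ) ∧
      (∀ K ≥ (1 : ℝ), ∀ x > 0, ∃ d : ℝ,
          HasDerivAt (fun x : ℝ => ∫ z in (0 : ℝ)..K, (1 - Real.cos (G (z / x)))) d x ∧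
          |d| ≤ C) ∧
      (∀ K ≥ (1 : ℝ), ∀ x > 0, ∀ y > 0,
          |(π * ∫ z in (0 : ℝ)..K, (1 - Real.cos (G (z / x ^ γ))))
            - (π * ∫ z in (0 : ℝ)..K, (1 - Real.cos (G (z / y ^ γ))))|
            ≤ C * |x ^ γ - y ^ γ|) := by
  obtain ⟨hν0, hν1⟩ := hν
  obtain ⟨hγ0, hγ1⟩ := hγ
  -- the extended integrand
  set g : ℝ → ℝ := fun z => 1 - Real.cos (G (max z 0)) with hg_def
  have hgcont : Continuous g := by
    have h1 : Continuous fun z : ℝ => G (max z 0) :=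
      hGc.comp_continuous (continuous_id.max continuous_const) (fun z => le_max_right z 0)
    exact continuous_const.sub (Real.continuous_cos.comp h1)
  have hgnn : ∀ z, 0 ≤ g z := fun z => by
    have := Real.cos_le_one (G (max z 0)); simp only [hg_def]; linarith
  -- G bound extends to 0 by continuity
  have hG0 : G 0 ≤ c₃ * (1 + 0 : ℝ) ^ (-1 / ν) := by
    have hT : Tendsto G (𝓝[>] (0:ℝ)) (𝓝 (G 0)) :=
      (hGc 0 (mem_Ici.mpr le_rfl)).mono_left (nhdsWithin_mono 0 Ioi_subset_Ici_self)
    have hT2 : Tendsto (fun z : ℝ => c₃ * (1 + z) ^ (-1 / ν)) (𝓝[>] (0:ℝ))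
        (𝓝 (c₃ * (1 + 0 : ℝ) ^ (-1 / ν))) := by
      apply Tendsto.mono_left _ nhdsWithin_le_nhds
      have : ContinuousAt (fun z : ℝ => c₃ * (1 + z) ^ (-1 / ν)) 0 := by
        apply ContinuousAt.mul continuousAt_const
        exact (Real.continuousAt_rpow_const _ _ (Or.inl (by norm_num))).comp
          (continuous_const.add continuous_id).continuousAt
      exact this
    exact le_of_tendsto_of_tendsto hT hT2 (eventually_mem_nhdsWithin.mono fun z hz => hG z hz)
  have hG' : ∀ z ≥ 0, G z ≤ c₃ * (1 + z) ^ (-1 / ν) := by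
    intro z hz
    rcases eq_or_lt_of_le hz with h | h
    · rw [← h]; exact hG0
    · exact hG z h
  -- pointwise bound on g
  have hgle : ∀ z ≥ 0, g z ≤ c₃ ^ 2 * (1 + z) ^ (-2 / ν) := by
    intro z hz
    have hmax : max z 0 = z := max_eq_left hz
    have h1 : g z ≤ (G z) ^ 2 := by
      have := Real.one_sub_sq_div_two_le_cos (x := G z)
      simp only [hg_def, hmax]
      nlinarith [sq_nonneg (G z)]
    have h2 : (G z) ^ 2 ≤ (c₃ * (1 + z) ^ (-1 / ν)) ^ 2 :=
      pow_le_pow_left₀ (hGnn z hz) (hG' z hz) 2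
    have h3 : (c₃ * (1 + z) ^ (-1 / ν)) ^ 2 = c₃ ^ 2 * (1 + z) ^ (-2 / ν) := by
      rw [mul_pow, ← Real.rpow_natCast ((1+z) ^ (-1/ν)) 2,
        ← Real.rpow_mul (by linarith : (0:ℝ) ≤ 1+z)]
      congr 1
      push_cast
      ring
    exact le_trans h1 (h3 ▸ h2)
  -- the antiderivative H and its properties
  set A : ℝ := c₃ ^ 2 * (ν / (2 - ν)) with hA_def
  have hA0 : 0 < A := by
    apply mul_pos (by positivity)
    apply div_pos hν0 (by linarith)
  set H : ℝ → ℝ := fun t => ∫ u in (0:ℝ)..t, g u with hH_def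
  have hHderiv : ∀ t : ℝ, HasDerivAt H (g t) t := fun t =>
    intervalIntegral.integral_hasDerivAt_right (hgcont.intervalIntegrable _ _)
      hgcont.aestronglyMeasurable.stronglyMeasurableAtFilter
      hgcont.continuousAt
  have hHnn : ∀ t, 0 ≤ t → 0 ≤ H t := fun t ht =>
    intervalIntegral.integral_nonneg ht (fun u _ => hgnn u)
  have hp : -2 / ν < -1 := by
    rw [div_lt_iff₀ hν0]; nlinarith
  have hq : -2 / ν + 1 < 0 := by linarith
  have hHle : ∀ t, 0 ≤ t → H t ≤ A := by
    intro t ht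
    have hint1 : IntervalIntegrable g volume 0 t := hgcont.intervalIntegrable _ _
    have hcont2 : ContinuousOn (fun u : ℝ => c₃ ^ 2 * (1 + u) ^ (-2 / ν)) (uIcc 0 t) := by
      apply ContinuousOn.mul continuousOn_const
      apply ContinuousOn.rpow_const (by fun_prop)
      intro u hu
      rw [Set.uIcc_of_le ht] at hu
      left; linarith [hu.1]
    have hmono : H t ≤ ∫ u in (0:ℝ)..t, c₃ ^ 2 * (1 + u) ^ (-2 / ν) := by
      apply intervalIntegral.integral_mono_on ht hint1 hcont2.intervalIntegrable
      intro u hu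
      exact hgle u hu.1
    have hcalc : (∫ u in (0:ℝ)..t, c₃ ^ 2 * (1 + u) ^ (-2 / ν))
        = c₃ ^ 2 * (((1 + t) ^ (-2 / ν + 1) - 1) / (-2 / ν + 1)) := by
      rw [intervalIntegral.integral_const_mul]
      congr 1
      have h1 : (∫ u in (0:ℝ)..t, (1 + u) ^ (-2 / ν))
          = ∫ u in (1:ℝ)..(1 + t), u ^ (-2 / ν) := by
        simpa using intervalIntegral.integral_comp_add_left (a := (0:ℝ)) (b := t)
          (fun u => u ^ (-2/ν)) 1
      rw [h1, integral_rpow]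
      · rw [Real.one_rpow]
      · right
        constructor
        · linarith
        · intro hmem
          have h1' := hmem.1
          simp only [inf_le_iff] at h1'
          rcases h1' with h | h <;> linarith
    rw [hcalc] at hmono
    refine hmono.trans ?_
    rw [hA_def]
    apply mul_le_mul_of_nonneg_left _ (by positivity)
    set X := (1 + t) ^ (-2 / ν + 1) with hX
    have hX0 : 0 ≤ X := Real.rpow_nonneg (by linarith) _
    have hν' : ν ≠ 0 := ne_of_gt hν0
    have h2ν : (2:ℝ) - ν ≠ 0 := by linarith
    have hXid : ν / (2 - ν) * (-2 / ν + 1) = -1 := by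
      field_simp
      ring
    rw [div_le_iff_of_neg hq]
    nlinarith
  -- bound on t * g t
  have htg : ∀ t, 0 ≤ t → t * g t ≤ c₃ ^ 2 := by
    intro t ht
    have b1 : t * g t ≤ t * (c₃ ^ 2 * (1 + t) ^ (-2 / ν)) :=
      mul_le_mul_of_nonneg_left (hgle t ht) ht
    have b2 : t * (c₃ ^ 2 * (1 + t) ^ (-2 / ν)) ≤ (1 + t) * (c₃ ^ 2 * (1 + t) ^ (-2 / ν)) :=
      mul_le_mul_of_nonneg_right (by linarith) (by positivity)
    have b3 : (1 + t) * (c₃ ^ 2 * (1 + t) ^ (-2 / ν)) = c₃ ^ 2 * (1 + t) ^ (-2 / ν + 1) := by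
      rw [Real.rpow_add_one (by linarith : (1:ℝ) + t ≠ 0)]
      ring
    have b4 : (1 + t) ^ (-2 / ν + 1) ≤ 1 :=
      Real.rpow_le_one_of_one_le_of_nonpos (by linarith) hq.le
    have b5 : c₃ ^ 2 * (1 + t) ^ (-2 / ν + 1) ≤ c₃ ^ 2 * 1 :=
      mul_le_mul_of_nonneg_left b4 (by positivity)
    calc t * g t ≤ t * (c₃ ^ 2 * (1 + t) ^ (-2 / ν)) := b1
      _ ≤ (1 + t) * (c₃ ^ 2 * (1 + t) ^ (-2 / ν)) := b2
      _ = c₃ ^ 2 * (1 + t) ^ (-2 / ν + 1) := b3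
      _ ≤ c₃ ^ 2 * 1 := b5
      _ = c₃ ^ 2 := mul_one _
  -- key substitution identity
  have key : ∀ K : ℝ, 0 ≤ K → ∀ x : ℝ, 0 < x →
      (∫ z in (0:ℝ)..K, (1 - Real.cos (G (z / x)))) = x * H (K / x) := by
    intro K hK x hx
    have e1 : (∫ z in (0:ℝ)..K, (1 - Real.cos (G (z / x)))) = ∫ z in (0:ℝ)..K, g (z / x) := by
      apply intervalIntegral.integral_congr
      intro z hz
      rw [Set.uIcc_of_le hK] at hz
      have hz0 : 0 ≤ z / x := div_nonneg hz.1 hx.le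
      simp [hg_def, max_eq_left hz0]
    rw [e1, intervalIntegral.integral_comp_div g (ne_of_gt hx), zero_div]
    simp only [hH_def, smul_eq_mul]
  -- derivative of F_K at x > 0
  have hderiv : ∀ K ≥ (1:ℝ), ∀ x > (0:ℝ),
      HasDerivAt (fun x : ℝ => ∫ z in (0:ℝ)..K, (1 - Real.cos (G (z / x))))
        (H (K / x) - K / x * g (K / x)) x := by
    intro K hK x hx
    have hx0 : x ≠ 0 := ne_of_gt hx
    have h1 : HasDerivAt (fun x : ℝ => K / x) (K * (-(x ^ 2)⁻¹)) x := by
      simpa [div_eq_mul_inv] using (hasDerivAt_inv hx0).const_mul K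
    have h2 : HasDerivAt (fun x : ℝ => H (K / x)) (g (K / x) * (K * (-(x ^ 2)⁻¹))) x :=
      (hHderiv (K / x)).comp x h1
    have h3 := (hasDerivAt_id x).mul h2
    have heq : (1:ℝ) * H (K / x) + id x * (g (K / x) * (K * (-(x ^ 2)⁻¹)))
        = H (K / x) - K / x * g (K / x) := by
      simp only [id]
      field_simp
      ring
    rw [heq] at h3
    apply h3.congr_of_eventuallyEq
    filter_upwards [Ioi_mem_nhds hx] with y hy
    exact key K (by linarith) y hy
  -- uniform bound on the derivative
  set B : ℝ := A + c₃ ^ 2 with hB_def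
  have hB0 : 0 < B := by positivity
  have habs : ∀ K ≥ (1:ℝ), ∀ x > (0:ℝ), |H (K / x) - K / x * g (K / x)| ≤ B := by
    intro K hK x hx
    have ht : (0:ℝ) < K / x := div_pos (by linarith) hx
    have h4 : 0 ≤ K / x * g (K / x) := mul_nonneg ht.le (hgnn _)
    have h5 : K / x * g (K / x) ≤ c₃ ^ 2 := htg (K / x) ht.le
    have h6 := hHnn (K / x) ht.le
    have h7 := hHle (K / x) ht.le
    rw [abs_le]
    constructor <;> [linarith; linarith]
  refine ⟨π * B + 1, by positivity, ?_, ?_, ?_⟩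
  · -- part (i)
    intro K hK x hx
    have hxγ : 0 < x ^ γ := Real.rpow_pos_of_pos hx γ
    rw [key K (by linarith) (x ^ γ) hxγ]
    have h1 : H (K / x ^ γ) ≤ A := hHle _ (div_nonneg (by linarith) hxγ.le)
    have h2 : π * (x ^ γ * H (K / x ^ γ)) ≤ π * (x ^ γ * A) :=
      mul_le_mul_of_nonneg_left (mul_le_mul_of_nonneg_left h1 hxγ.le) pi_pos.le
    have h3 : π * (x ^ γ * A) ≤ (π * B + 1) * x ^ γ := by
      have : π * A ≤ π * B + 1 := by nlinarith [pi_pos, sq_nonneg c₃]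
      nlinarith
    exact h2.trans h3
  · -- part (ii)
    intro K hK x hx
    exact ⟨H (K / x) - K / x * g (K / x), hderiv K hK x hx, (habs K hK x hx).trans (by nlinarith [pi_gt_three])⟩
  · -- part (iii)
    intro K hK x hx y hy
    have hxγ : 0 < x ^ γ := Real.rpow_pos_of_pos hx γ
    have hyγ : 0 < y ^ γ := Real.rpow_pos_of_pos hy γ
    have hmvt := (convex_Ioi (0:ℝ)).norm_image_sub_le_of_norm_hasDerivWithin_le
      (f := fun a : ℝ => ∫ z in (0:ℝ)..K, (1 - Real.cos (G (z / a))))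
      (f' := fun a : ℝ => H (K / a) - K / a * g (K / a)) (C := B)
      (fun a ha => (hderiv K hK a ha).hasDerivWithinAt)
      (fun a ha => by rw [Real.norm_eq_abs]; exact habs K hK a ha)
      (mem_Ioi.mpr hyγ) (mem_Ioi.mpr hxγ)
    rw [Real.norm_eq_abs, Real.norm_eq_abs] at hmvt
    rw [← mul_sub, abs_mul, abs_of_nonneg pi_pos.le]
    calc π * |(∫ z in (0:ℝ)..K, (1 - Real.cos (G (z / x ^ γ))))
          - (∫ z in (0:ℝ)..K, (1 - Real.cos (G (z / y ^ γ))))|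
        ≤ π * (B * |x ^ γ - y ^ γ|) := mul_le_mul_of_nonneg_left hmvt pi_pos.le
      _ ≤ (π * B + 1) * |x ^ γ - y ^ γ| := by
          have := abs_nonneg (x ^ γ - y ^ γ)
          nlinarith
end

section
/- Let γ ∈ (-1, 0), K ≥ 1, and let Φ_K: (0,∞) → [0,∞) satisfy Φ_K(x) ≤ C₁ x^γ and |Φ_K(x) - Φ_K(y)| ≤ C₁ |x^γ - y^γ| for all x, y > 0. Then there is a constant C (depending only on C₁, γ) such that for all nonzero X, Y ∈ ℝ³: |X Φ_K(|X|) - Y Φ_K(|Y|)| ≤ C |X - Y| · |X|^γ. -/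
open Real Set

lemma key9 (γ : ℝ) (hγ1 : -1 < γ) (hγ2 : γ < 0) (x y : ℝ) (hx : 0 < x) (hy : 0 < y) :
    y * |x ^ γ - y ^ γ| ≤ |x - y| * x ^ γ := by
  have h1γ : (0:ℝ) ≤ 1 + γ := by linarith
  have hxx : x * x ^ γ = x ^ (1 + γ) := by
    rw [Real.rpow_add hx, Real.rpow_one]
  have hyy : y * y ^ γ = y ^ (1 + γ) := by
    rw [Real.rpow_add hy, Real.rpow_one]
  rcases le_total x y with h | h
  · have h1 : y ^ γ ≤ x ^ γ := Real.rpow_le_rpow_of_nonpos hx h hγ2.le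
    rw [abs_of_nonneg (sub_nonneg.2 h1), abs_of_nonpos (sub_nonpos.2 h)]
    have h2 : x ^ (1 + γ) ≤ y ^ (1 + γ) := Real.rpow_le_rpow hx.le h h1γ
    nlinarith [hxx, hyy]
  · have h1 : x ^ γ ≤ y ^ γ := Real.rpow_le_rpow_of_nonpos hy h hγ2.le
    rw [abs_of_nonpos (sub_nonpos.2 h1), abs_of_nonneg (sub_nonneg.2 h)]
    have h2 : y ^ (1 + γ) ≤ x ^ (1 + γ) := Real.rpow_le_rpow hy.le h h1γ
    nlinarith [hxx, hyy]

/-- If `Φ_K` satisfies `0 ≤ Φ_K(x) ≤ C₁ x^γ` and `|Φ_K(x) - Φ_K(y)| ≤ C₁|x^γ - y^γ|`,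
then `|X Φ_K(|X|) - Y Φ_K(|Y|)| ≤ C |X - Y| |X|^γ` with `C` depending only on `C₁, γ`. -/
theorem stmt9 (γ C₁ : ℝ) (hγ : γ ∈ Set.Ioo (-1 : ℝ) 0) (hC₁ : 0 < C₁) :
    ∃ C > 0, ∀ Φ : ℝ → ℝ,
      (∀ x > 0, 0 ≤ Φ x) →
      (∀ x > 0, Φ x ≤ C₁ * x ^ γ) →
      (∀ x > 0, ∀ y > 0, |Φ x - Φ y| ≤ C₁ * |x ^ γ - y ^ γ|) →
      ∀ X Y : EuclideanSpace ℝ (Fin 3), X ≠ 0 → Y ≠ 0 →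
        ‖Φ ‖X‖ • X - Φ ‖Y‖ • Y‖ ≤ C * ‖X - Y‖ * ‖X‖ ^ γ := by
  obtain ⟨hγ1, hγ2⟩ := hγ
  refine ⟨2 * C₁, by positivity, fun Φ hpos hbd hlip X Y hX hY => ?_⟩
  have hXn : (0:ℝ) < ‖X‖ := norm_pos_iff.2 hX
  have hYn : (0:ℝ) < ‖Y‖ := norm_pos_iff.2 hY
  have hdecomp : Φ ‖X‖ • X - Φ ‖Y‖ • Y
      = Φ ‖X‖ • (X - Y) + (Φ ‖X‖ - Φ ‖Y‖) • Y := by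
    simp [smul_sub, sub_smul]
  rw [hdecomp]
  have h1 : ‖Φ ‖X‖ • (X - Y)‖ ≤ C₁ * ‖X‖ ^ γ * ‖X - Y‖ := by
    rw [norm_smul, Real.norm_eq_abs, abs_of_nonneg (hpos _ hXn)]
    exact mul_le_mul_of_nonneg_right (hbd _ hXn) (norm_nonneg _)
  have h2 : ‖(Φ ‖X‖ - Φ ‖Y‖) • Y‖ ≤ C₁ * ‖X - Y‖ * ‖X‖ ^ γ := by
    rw [norm_smul, Real.norm_eq_abs]
    calc |Φ ‖X‖ - Φ ‖Y‖| * ‖Y‖ ≤ (C₁ * |‖X‖ ^ γ - ‖Y‖ ^ γ|) * ‖Y‖ :=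
          mul_le_mul_of_nonneg_right (hlip _ hXn _ hYn) (norm_nonneg _)
      _ = C₁ * (‖Y‖ * |‖X‖ ^ γ - ‖Y‖ ^ γ|) := by ring
      _ ≤ C₁ * (|‖X‖ - ‖Y‖| * ‖X‖ ^ γ) :=
          mul_le_mul_of_nonneg_left (key9 γ hγ1 hγ2 _ _ hXn hYn) hC₁.le
      _ ≤ C₁ * (‖X - Y‖ * ‖X‖ ^ γ) := by
          exact mul_le_mul_of_nonneg_left
            (mul_le_mul_of_nonneg_right (abs_norm_sub_norm_le X Y)
              (Real.rpow_pos_of_pos hXn γ).le) hC₁.le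
      _ = C₁ * ‖X - Y‖ * ‖X‖ ^ γ := by ring
  calc ‖Φ ‖X‖ • (X - Y) + (Φ ‖X‖ - Φ ‖Y‖) • Y‖
      ≤ ‖Φ ‖X‖ • (X - Y)‖ + ‖(Φ ‖X‖ - Φ ‖Y‖) • Y‖ := norm_add_le _ _
    _ ≤ C₁ * ‖X‖ ^ γ * ‖X - Y‖ + C₁ * ‖X - Y‖ * ‖X‖ ^ γ := add_le_add h1 h2
    _ = 2 * C₁ * ‖X - Y‖ * ‖X‖ ^ γ := by ring
end

section
/- Let f be a probability measure on ℝ³ with finite second moment, L = √(2 m₂(f)), and for ε ∈ (0,1) let φ_ε(x) = (2πε)^{-3/2} e^{-|x|²/(2ε)} and f^ε(x) = ∫_{ℝ³} φ_ε(v - x) f(dv). Then for every x ∈ ℝ³: (i) f^ε(x) ≥ φ_ε(|x| + L)/2, where φ_ε(r) denotes the value of φ_ε at any point of norm r; and (ii) J_ε(x) := (f^ε(x))^{-1} ∫_{ℝ³} |v| φ_ε(v - x) f(dv) ≤ 2|x| + 4√(m₂(f)). -/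
open Real Set MeasureTheory ProbabilityTheory Metric

/-!
Half of the mass of `f` lies in the ball `B(0, L)` by Markov's inequality, and for `v` in that ball
`|v - x| ≤ |x| + L`; as `φ_ε` is radially decreasing this gives (i). For (ii), pointwise
`|v| φ_ε(v - x) ≤ (2|x| + L) φ_ε(v - x) + φ_ε(|x| + L) |v|`, according to whether
`|v - x| ≤ |x| + L` or not; integrating, using `∫ |v| df ≤ √m₂(f)` and (i) to absorb the last
term, gives (ii) since `L ≤ 2 √m₂(f)`.
-/

section SecondMoment

variable {E : Type*} [NormedAddCommGroup E] [MeasurableSpace E] [OpensMeasurableSpace E]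
  {μ : Measure E}

theorem memLp_norm_two_of_integrable_norm_sq (hm : Integrable (fun v => ‖v‖ ^ 2) μ) :
    MemLp (fun v : E => ‖v‖) 2 μ :=
  (memLp_two_iff_integrable_sq continuous_norm.aestronglyMeasurable).2 hm

variable [IsProbabilityMeasure μ]

theorem half_le_measureReal_closedBall_sqrt_two_mul_integral_norm_sq
    (hm : Integrable (fun v => ‖v‖ ^ 2) μ) :
    1 / 2 ≤ μ.real (closedBall 0 (√(2 * ∫ v, ‖v‖ ^ 2 ∂μ))) := by
  set m₂ := ∫ v, ‖v‖ ^ 2 ∂μ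
  have hm₂ : 0 ≤ m₂ := integral_nonneg fun v => sq_nonneg _
  suffices μ.real (closedBall 0 √(2 * m₂))ᶜ ≤ 1 / 2 by
    rw [probReal_compl_eq_one_sub measurableSet_closedBall] at this
    linarith
  rcases hm₂.eq_or_lt with hzero | hpos
  · have hnorm : ∀ᵐ v ∂μ, ‖v‖ ^ 2 = 0 :=
      (integral_eq_zero_iff_of_nonneg (fun v => sq_nonneg _) hm).1 hzero.symm
    have hball : ∀ᵐ v ∂μ, v ∈ closedBall 0 √(2 * m₂) := by
      filter_upwards [hnorm] with v hv
      rw [mem_closedBall_zero_iff, pow_eq_zero_iff two_ne_zero |>.1 hv]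
      positivity
    have hcompl : μ (closedBall 0 √(2 * m₂))ᶜ = 0 := ae_iff.1 hball
    rw [measureReal_def, hcompl]
    norm_num
  · have markov := mul_meas_ge_le_integral_of_nonneg (Filter.Eventually.of_forall
      fun v => sq_nonneg ‖v‖) hm (2 * m₂)
    have hsub : (closedBall (0 : E) √(2 * m₂))ᶜ ⊆ {v | 2 * m₂ ≤ ‖v‖ ^ 2} := fun v hv => by
      have : √(2 * m₂) < ‖v‖ := by simpa using hv
      exact (Real.sqrt_lt' ((Real.sqrt_nonneg _).trans_lt this)).1 this |>.le
    have := measureReal_mono hsub (μ := μ)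
    nlinarith

theorem integral_norm_le_sqrt_integral_norm_sq (hm : Integrable (fun v => ‖v‖ ^ 2) μ) :
    ∫ v, ‖v‖ ∂μ ≤ √(∫ v, ‖v‖ ^ 2 ∂μ) := by
  have := variance_eq_sub (memLp_norm_two_of_integrable_norm_sq hm) ▸
    variance_nonneg (fun v : E => ‖v‖) μ
  exact Real.le_sqrt_of_sq_le (by simpa [Pi.pow_apply] using this)

end SecondMoment

section RadialKernel

variable {E : Type*} [NormedAddCommGroup E] {k : ℝ → ℝ}

theorem norm_comp_norm_sub_le (hk_nonneg : ∀ r, 0 ≤ k r) (hk_anti : AntitoneOn k (Ici 0))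
    (x v : E) : ‖k ‖v - x‖‖ ≤ k 0 := by
  rw [Real.norm_of_nonneg (hk_nonneg _)]
  exact hk_anti self_mem_Ici (norm_nonneg _) (norm_nonneg _)

theorem norm_mul_comp_norm_sub_le (hk_nonneg : ∀ r, 0 ≤ k r) (hk_anti : AntitoneOn k (Ici 0))
    {r : ℝ} (hr : 0 ≤ r) (x v : E) :
    ‖v‖ * k ‖v - x‖ ≤ (‖x‖ + r) * k ‖v - x‖ + k r * ‖v‖ := by
  have hk := hk_nonneg ‖v - x‖
  rcases le_or_gt ‖v - x‖ r with hnear | hfar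
  · have : ‖v‖ ≤ ‖x‖ + r := by
      have := norm_le_norm_add_norm_sub' v x
      linarith
    nlinarith [hk_nonneg r, norm_nonneg v]
  · have := hk_anti hr (norm_nonneg _) hfar.le
    nlinarith [norm_nonneg v, norm_nonneg x]

variable [MeasurableSpace E] [OpensMeasurableSpace E] {μ : Measure E} [IsProbabilityMeasure μ]

theorem integrable_comp_norm_sub (hk_nonneg : ∀ r, 0 ≤ k r) (hk_anti : AntitoneOn k (Ici 0))
    (hk_meas : Measurable k) (x : E) : Integrable (fun v => k ‖v - x‖) μ :=
  .of_bound (hk_meas.comp (continuous_norm.comp (continuous_sub_right x)).measurable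
    |>.aestronglyMeasurable) (k 0) (.of_forall (norm_comp_norm_sub_le hk_nonneg hk_anti x))

theorem half_le_integral_comp_norm_sub (hk_nonneg : ∀ r, 0 ≤ k r)
    (hk_anti : AntitoneOn k (Ici 0)) (hk_meas : Measurable k)
    (hm : Integrable (fun v => ‖v‖ ^ 2) μ) (x : E) :
    k (‖x‖ + √(2 * ∫ v, ‖v‖ ^ 2 ∂μ)) / 2 ≤ ∫ v, k ‖v - x‖ ∂μ := by
  set L := √(2 * ∫ v, ‖v‖ ^ 2 ∂μ)
  have hball : ∀ v, (closedBall 0 L).indicator (fun _ => k (‖x‖ + L)) v ≤ k ‖v - x‖ := by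
    intro v
    by_cases hv : v ∈ closedBall 0 L
    · rw [indicator_of_mem hv]
      refine hk_anti (norm_nonneg _) (mem_Ici.2 (by positivity)) ?_
      have := norm_sub_le v x
      have := mem_closedBall_zero_iff.1 hv
      linarith
    · rw [indicator_of_notMem hv]
      exact hk_nonneg _
  calc k (‖x‖ + L) / 2 ≤ μ.real (closedBall 0 L) • k (‖x‖ + L) := by
        rw [smul_eq_mul]
        nlinarith [half_le_measureReal_closedBall_sqrt_two_mul_integral_norm_sq hm,
          hk_nonneg (‖x‖ + L)]
    _ = ∫ v, (closedBall 0 L).indicator (fun _ => k (‖x‖ + L)) v ∂μ :=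
        (integral_indicator_const _ measurableSet_closedBall).symm
    _ ≤ ∫ v, k ‖v - x‖ ∂μ :=
        integral_mono ((integrable_const _).indicator measurableSet_closedBall)
          (integrable_comp_norm_sub hk_nonneg hk_anti hk_meas x) hball

theorem integral_norm_mul_comp_norm_sub_le (hk_nonneg : ∀ r, 0 ≤ k r)
    (hk_anti : AntitoneOn k (Ici 0)) (hk_meas : Measurable k)
    (hm : Integrable (fun v => ‖v‖ ^ 2) μ) {r : ℝ} (hr : 0 ≤ r) (x : E) :
    ∫ v, ‖v‖ * k ‖v - x‖ ∂μ ≤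
      (‖x‖ + r) * ∫ v, k ‖v - x‖ ∂μ + k r * √(∫ v, ‖v‖ ^ 2 ∂μ) := by
  have hk_int := integrable_comp_norm_sub hk_nonneg hk_anti hk_meas x (μ := μ)
  have hnorm_int := (memLp_norm_two_of_integrable_norm_sq hm).integrable one_le_two
  calc ∫ v, ‖v‖ * k ‖v - x‖ ∂μ ≤ ∫ v, (‖x‖ + r) * k ‖v - x‖ + k r * ‖v‖ ∂μ :=
        integral_mono (hnorm_int.mul_bdd hk_int.aestronglyMeasurable
            (.of_forall (norm_comp_norm_sub_le hk_nonneg hk_anti x)))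
          ((hk_int.const_mul _).add (hnorm_int.const_mul _))
          (norm_mul_comp_norm_sub_le hk_nonneg hk_anti hr x)
    _ = (‖x‖ + r) * ∫ v, k ‖v - x‖ ∂μ + k r * ∫ v, ‖v‖ ∂μ := by
        rw [integral_add (hk_int.const_mul _) (hnorm_int.const_mul _), integral_const_mul,
          integral_const_mul]
    _ ≤ (‖x‖ + r) * ∫ v, k ‖v - x‖ ∂μ + k r * √(∫ v, ‖v‖ ^ 2 ∂μ) := by
        gcongr
        · exact hk_nonneg r
        · exact integral_norm_le_sqrt_integral_norm_sq hm

theorem integral_norm_mul_comp_norm_sub_div_le (hk_nonneg : ∀ r, 0 ≤ k r)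
    (hk_anti : AntitoneOn k (Ici 0)) (hk_meas : Measurable k)
    (hm : Integrable (fun v => ‖v‖ ^ 2) μ) (x : E) :
    (∫ v, ‖v‖ * k ‖v - x‖ ∂μ) / (∫ v, k ‖v - x‖ ∂μ) ≤
      2 * ‖x‖ + 4 * √(∫ v, ‖v‖ ^ 2 ∂μ) := by
  set m₂ := ∫ v, ‖v‖ ^ 2 ∂μ
  have hL : √(2 * m₂) ≤ 2 * √m₂ := by
    rw [Real.sqrt_mul zero_le_two]
    gcongr
    rw [Real.sqrt_le_left zero_le_two]
    norm_num
  rcases (integral_nonneg fun v => hk_nonneg ‖v - x‖ : 0 ≤ ∫ v, k ‖v - x‖ ∂μ).eq_or_lt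
    with hzero | hpos
  · rw [← hzero, div_zero]
    positivity
  rw [div_le_iff₀ hpos]
  have hsplit := integral_norm_mul_comp_norm_sub_le hk_nonneg hk_anti hk_meas hm
    (add_nonneg (norm_nonneg x) (Real.sqrt_nonneg (2 * m₂))) x
  have hlower := half_le_integral_comp_norm_sub hk_nonneg hk_anti hk_meas hm x
  nlinarith [Real.sqrt_nonneg m₂]

end RadialKernel

/-- For the Gaussian `φ_ε(x) = (2πε)^{-3/2} e^{-|x|²/(2ε)}`, `f ∈ 𝒫₂(ℝ³)`,
`L = √(2 m₂(f))` and `f^ε(x) = ∫ φ_ε(v-x) f(dv)`: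
(i) `f^ε(x) ≥ φ_ε(|x|+L)/2`; (ii) `(f^ε(x))⁻¹ ∫ |v| φ_ε(v-x) f(dv) ≤ 2|x| + 4√(m₂(f))`. -/
theorem stmt12 (ε : ℝ) (hε : ε ∈ Set.Ioo (0 : ℝ) 1)
    (f : Measure (EuclideanSpace ℝ (Fin 3))) [IsProbabilityMeasure f]
    (hm : Integrable (fun v => ‖v‖ ^ 2) f) (x : EuclideanSpace ℝ (Fin 3)) :
    ((2 * π * ε) ^ (-(3 : ℝ) / 2) *
        Real.exp (-(‖x‖ + Real.sqrt (2 * ∫ v, ‖v‖ ^ 2 ∂f)) ^ 2 / (2 * ε))) / 2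
      ≤ ∫ v, (2 * π * ε) ^ (-(3 : ℝ) / 2) * Real.exp (-‖v - x‖ ^ 2 / (2 * ε)) ∂f ∧
    (∫ v, ‖v‖ * ((2 * π * ε) ^ (-(3 : ℝ) / 2) * Real.exp (-‖v - x‖ ^ 2 / (2 * ε))) ∂f)
        / (∫ v, (2 * π * ε) ^ (-(3 : ℝ) / 2) * Real.exp (-‖v - x‖ ^ 2 / (2 * ε)) ∂f)
      ≤ 2 * ‖x‖ + 4 * Real.sqrt (∫ v, ‖v‖ ^ 2 ∂f) := by
  have hε₀ : 0 < ε := hε.1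
  set k : ℝ → ℝ := fun r => (2 * π * ε) ^ (-(3 : ℝ) / 2) * Real.exp (-r ^ 2 / (2 * ε))
  have hk_nonneg : ∀ r, 0 ≤ k r := fun r => by positivity
  have hk_anti : AntitoneOn k (Ici 0) := fun r hr s hs hrs => by
    have : r ^ 2 ≤ s ^ 2 := pow_le_pow_left₀ hr hrs 2
    dsimp only [k]
    gcongr
  have hk_meas : Measurable k := by fun_prop
  exact ⟨half_le_integral_comp_norm_sub hk_nonneg hk_anti hk_meas hm x,
    integral_norm_mul_comp_norm_sub_div_le hk_nonneg hk_anti hk_meas hm x⟩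
end
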